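/- Let p and Q be nonzero complex numbers. Then the set of (complex) eigenvalues of the quantum R matrix Ř⁴ is exactly {1, −p²Q^{−2}, p⁴, pQ^{−1}, −pQ^{−1}, p³Q^{−1}, −p³Q^{−1}, p²Q^{−2}, p², −p²}. -/

import Mathlib

open Matrix

noncomputable section

/-- The elementary matrix `E(a,b;c,d)` on `ℂ⁴ ⊗ ℂ⁴`. -/
def E (a b c d : Fin 4) : Matrix (Fin 4 × Fin 4) (Fin 4 × Fin 4) ℂ :=
  Matrix.single (a, b) (c, d) 1

/-- `M ⊗ I₄`, acting on the first two factors of `ℂ⁴ ⊗ ℂ⁴ ⊗ ℂ⁴`. -/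
def op12 (M : Matrix (Fin 4 × Fin 4) (Fin 4 × Fin 4) ℂ) :
    Matrix (Fin 4 × Fin 4 × Fin 4) (Fin 4 × Fin 4 × Fin 4) ℂ :=
  Matrix.of fun x y => M (x.1, x.2.1) (y.1, y.2.1) * (if x.2.2 = y.2.2 then 1 else 0)

/-- `I₄ ⊗ M`, acting on the last two factors of `ℂ⁴ ⊗ ℂ⁴ ⊗ ℂ⁴`. -/
def op23 (M : Matrix (Fin 4 × Fin 4) (Fin 4 × Fin 4) ℂ) :
    Matrix (Fin 4 × Fin 4 × Fin 4) (Fin 4 × Fin 4 × Fin 4) ℂ :=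
  Matrix.of fun x y => (if x.1 = y.1 then 1 else 0) * M (x.2.1, x.2.2) (y.2.1, y.2.2)

/-- The left quantum partial trace `T(C, M)_{a,b} = Σ_{c,d} C_{d,c} M_{(c,a),(d,b)}`. -/
def ptrace (C : Matrix (Fin 4) (Fin 4) ℂ) (M : Matrix (Fin 4 × Fin 4) (Fin 4 × Fin 4) ℂ) :
    Matrix (Fin 4) (Fin 4) ℂ :=
  Matrix.of fun a b => ∑ c : Fin 4, ∑ d : Fin 4, C d c * M (c, a) (d, b)

/-- The quantum R matrix `Ř⁴` (Case 4), with complex parameters `p, Q`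
(indices shifted from 1–4 to 0–3). -/
def R4 (p Q : ℂ) : Matrix (Fin 4 × Fin 4) (Fin 4 × Fin 4) ℂ :=
  E 0 0 0 0
  - (p ^ 2 * Q⁻¹ ^ 2) • (E 1 1 1 1 + E 2 2 2 2)
  + (p ^ 4) • E 3 3 3 3
  + (p * Q⁻¹) • (E 0 1 1 0 + E 0 2 2 0 + E 1 0 0 1 + E 2 0 0 2)
  + (p ^ 3 * Q⁻¹) • (E 1 3 3 1 + E 2 3 3 2 + E 3 1 1 3 + E 3 2 2 3)
  + (p ^ 2 * Q⁻¹ ^ 2) • (E 0 3 3 0 + E 3 0 0 3)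
  - (p ^ 2) • (E 1 2 2 1 + E 2 1 1 2)

/-!
`Ř⁴` sends `v_c ⊗ v_d` to a multiple of `v_d ⊗ v_c`, with a weight `w c d` symmetric in `c, d`:
it is the flip of the tensor factors followed by a diagonal matrix. Hence it preserves each line
`ℂ (v_i ⊗ v_i)`, acting there by `w i i`, and each plane spanned by `v_i ⊗ v_j, v_j ⊗ v_i`
(`i ≠ j`), acting there by `[[0, w i j], [w i j, 0]]`, with eigenvalues `± w i j`.
-/

namespace Matrix

variable {n K : Type*} [DecidableEq n] [CommRing K]

def weightedSwap (w : Matrix n n K) : Matrix (n × n) (n × n) K :=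
  of fun x y => if y = x.swap then w x.1 x.2 else 0

variable [Fintype n]

theorem weightedSwap_mulVec (w : Matrix n n K) (v : n × n → K) (x : n × n) :
    (weightedSwap w *ᵥ v) x = w x.1 x.2 * v x.swap := by
  simp [weightedSwap, mulVec, dotProduct, ite_mul]

theorem weightedSwap_mulVec_single (w : Matrix n n K) (x : n × n) (c : K) :
    weightedSwap w *ᵥ Pi.single x c = Pi.single x.swap (w x.2 x.1 * c) := by
  ext y
  rw [weightedSwap_mulVec]
  rcases eq_or_ne y x.swap with rfl | hy
  · simp
  · simp [hy, Prod.swap_eq_iff_eq_swap]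

theorem weightedSwap_mulVec_single_add_single {w : Matrix n n K} (hw : w.IsSymm)
    {s : K} (hs : s * s = 1) (i j : n) :
    weightedSwap w *ᵥ (Pi.single (i, j) 1 + Pi.single (j, i) s) =
      (s * w i j) • (Pi.single (i, j) 1 + Pi.single (j, i) s) := by
  rw [mulVec_add, weightedSwap_mulVec_single, weightedSwap_mulVec_single, smul_add,
    ← Pi.single_smul', ← Pi.single_smul', add_comm]
  simp only [Prod.swap_prod_mk, hw.apply i j, smul_eq_mul]
  congr 2
  · ring
  · linear_combination (-w i j) * hs

theorem exists_mulVec_weightedSwap_eq_smul_iff [IsDomain K] {w : Matrix n n K} (hw : w.IsSymm)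
    (lam : K) :
    (∃ v : n × n → K, v ≠ 0 ∧ weightedSwap w *ᵥ v = lam • v) ↔
      (∃ i, lam = w i i) ∨ ∃ i j, i ≠ j ∧ (lam = w i j ∨ lam = -w i j) := by
  constructor
  · rintro ⟨v, hv, h⟩
    have eigen_eq (x : n × n) : w x.1 x.2 * v x.swap = lam * v x := by
      simpa [weightedSwap_mulVec] using congrFun h x
    obtain ⟨⟨i, j⟩, hx⟩ : ∃ x, v x ≠ 0 := Function.ne_iff.mp hv
    by_cases hij : i = j
    · subst hij
      exact Or.inl ⟨i, (mul_right_cancel₀ hx (eigen_eq (i, i))).symm⟩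
    · refine Or.inr ⟨i, j, hij, sq_eq_sq_iff_eq_or_eq_neg.mp (mul_right_cancel₀ hx ?_)⟩
      have e1 := eigen_eq (i, j)
      have e2 := eigen_eq (j, i)
      simp only [Prod.swap_prod_mk] at e1 e2
      rw [hw.apply i j] at e2
      linear_combination (-lam) * e1 - w i j * e2
  · have pair_ne_zero (i j : n) (hij : i ≠ j) (s : K) :
        (Pi.single (i, j) 1 + Pi.single (j, i) s : n × n → K) ≠ 0 :=
      fun h => by simpa [hij.symm] using congrFun h (i, j)
    rintro (⟨i, rfl⟩ | ⟨i, j, hij, rfl | rfl⟩)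
    · refine ⟨Pi.single (i, i) 1, by simp, ?_⟩
      rw [weightedSwap_mulVec_single, ← Pi.single_smul', smul_eq_mul]
      rfl
    · refine ⟨_, pair_ne_zero i j hij 1, ?_⟩
      simpa using weightedSwap_mulVec_single_add_single hw (one_mul 1) i j
    · refine ⟨_, pair_ne_zero i j hij (-1), ?_⟩
      simpa using weightedSwap_mulVec_single_add_single hw (by norm_num : (-1 : K) * -1 = 1) i j

end Matrix

def R4Weights (p Q : ℂ) : Matrix (Fin 4) (Fin 4) ℂ :=
  !![1, p * Q⁻¹, p * Q⁻¹, p ^ 2 * Q⁻¹ ^ 2;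
     p * Q⁻¹, -(p ^ 2 * Q⁻¹ ^ 2), -(p ^ 2), p ^ 3 * Q⁻¹;
     p * Q⁻¹, -(p ^ 2), -(p ^ 2 * Q⁻¹ ^ 2), p ^ 3 * Q⁻¹;
     p ^ 2 * Q⁻¹ ^ 2, p ^ 3 * Q⁻¹, p ^ 3 * Q⁻¹, p ^ 4]

theorem R4Weights_isSymm (p Q : ℂ) : (R4Weights p Q).IsSymm := by
  ext i j
  fin_cases i <;> fin_cases j <;> rfl

theorem R4_eq_weightedSwap (p Q : ℂ) : R4 p Q = weightedSwap (R4Weights p Q) := by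
  ext ⟨a, b⟩ ⟨c, d⟩
  simp only [R4, E, weightedSwap, Matrix.sub_apply, Matrix.add_apply, Matrix.smul_apply,
    single_apply, of_apply, Prod.mk.injEq, Prod.swap_prod_mk, smul_eq_mul]
  fin_cases a <;> fin_cases b <;> simp [R4Weights, eq_comm, neg_ite]

theorem R4_eigenvalues_general (p Q : ℂ) :
    ∀ lam : ℂ,
      (∃ v : Fin 4 × Fin 4 → ℂ, v ≠ 0 ∧ (R4 p Q).mulVec v = lam • v) ↔
        lam ∈ ({1, -(p ^ 2 * Q⁻¹ ^ 2), p ^ 4, p * Q⁻¹, -(p * Q⁻¹),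
                p ^ 3 * Q⁻¹, -(p ^ 3 * Q⁻¹), p ^ 2 * Q⁻¹ ^ 2, p ^ 2, -(p ^ 2)} : Set ℂ) := by
  intro lam
  rw [R4_eq_weightedSwap, exists_mulVec_weightedSwap_eq_smul_iff (R4Weights_isSymm p Q)]
  simp only [R4Weights, inv_pow, of_apply, cons_val', cons_val_fin_one, Fin.exists_fin_succ,
    Fin.isValue, cons_val_zero, cons_val_succ, exists_const, or_self_left, ne_eq,
    Fin.succ_zero_eq_one, Fin.succ_one_eq_two, exists_and_right, Fin.reduceSucc,
    IsEmpty.exists_iff, or_false, not_true_eq_false, false_and, zero_ne_one, not_false_eq_true,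
    true_and, Fin.reduceEq, false_or, Fin.succ_ne_zero, neg_neg, or_self, Set.mem_insert_iff,
    Set.mem_singleton_iff]
  tauto

/-- The set of eigenvalues of the quantum R matrix `Ř⁴` is exactly
`{1, −p²Q⁻², p⁴, pQ⁻¹, −pQ⁻¹, p³Q⁻¹, −p³Q⁻¹, p²Q⁻², p², −p²}`. -/
theorem R4_eigenvalues (p Q : ℂ) (hp : p ≠ 0) (hQ : Q ≠ 0) :
    ∀ lam : ℂ,
      (∃ v : Fin 4 × Fin 4 → ℂ, v ≠ 0 ∧ (R4 p Q).mulVec v = lam • v) ↔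
        lam ∈ ({1, -(p ^ 2 * Q⁻¹ ^ 2), p ^ 4, p * Q⁻¹, -(p * Q⁻¹),
                p ^ 3 * Q⁻¹, -(p ^ 3 * Q⁻¹), p ^ 2 * Q⁻¹ ^ 2, p ^ 2, -(p ^ 2)} : Set ℂ) :=
  R4_eigenvalues_general p Q
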